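/- arXiv:1202.1223 — 2 statements merged into one kernel-verified Lean document; each statement's English description precedes it below -/
import Mathlib

section
/- Let T_0 be a rooted tree whose root has k ≥ 3 children with subtrees T_1,...,T_k, and let T_0' be the tree whose root has two children: a new node x with children the roots of T_1,...,T_{k−1}, and the root of T_k. Then Φ(T_0') − Φ(T_0) = binom(|L(T_1)|+...+|L(T_{k−1})|, 2) > 0. -/
/-- Rooted trees with natural-number-labeled leaves. -/
inductive PTree where
  | leaf : ℕ → PTree
  | node : List PTree → PTree

namespace PTree

/-- The list of leaf labels of a tree, in left-to-right order. -/
def leaves : PTree → List ℕ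
  | .leaf i => [i]
  | .node ts => ts.attach.flatMap (fun t => leaves t.1)
decreasing_by have := List.sizeOf_lt_of_mem t.2; simp_wf; omega

/-- The depth (number of arcs from the root) of the leaf labeled `i`. -/
def leafDepth : PTree → ℕ → ℕ
  | .leaf _, _ => 0
  | .node ts, i =>
      (ts.attach.map (fun t => if i ∈ leaves t.1 then 1 + leafDepth t.1 i else 0)).sum
decreasing_by have := List.sizeOf_lt_of_mem t.2; simp_wf; omega

/-- The cophenetic value of `i` and `j`: the depth of their lowest common ancestor. -/
def cophen : PTree → ℕ → ℕ → ℕ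
  | .leaf _, _, _ => 0
  | .node ts, i, j =>
      (ts.attach.map (fun t =>
        if i ∈ leaves t.1 ∧ j ∈ leaves t.1 then 1 + cophen t.1 i j else 0)).sum
decreasing_by have := List.sizeOf_lt_of_mem t.2; simp_wf; omega

/-- The nodal distance between the leaves labeled `i` and `j`:
the number of edges on the undirected path joining them. -/
def ndist : PTree → ℕ → ℕ → ℕ
  | .leaf _, _, _ => 0
  | .node ts, i, j =>
      (ts.attach.map (fun t =>
        if i ∈ leaves t.1 ∧ j ∈ leaves t.1 then ndist t.1 i j
        else if i ∈ leaves t.1 then 1 + leafDepth t.1 i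
        else if j ∈ leaves t.1 then 1 + leafDepth t.1 j
        else 0)).sum
decreasing_by have := List.sizeOf_lt_of_mem t.2; simp_wf; omega

/-- The list of the numbers of descendant leaves of each internal node,
with the root (if internal) first. -/
def allInternalSizes : PTree → List ℕ
  | .leaf _ => []
  | .node ts => (PTree.node ts).leaves.length :: ts.attach.flatMap (fun t => allInternalSizes t.1)
decreasing_by have := List.sizeOf_lt_of_mem t.2; simp_wf; omega

/-- The total cophenetic index: sum of cophenetic values over pairs of distinct leaves. -/
def Phi (T : PTree) : ℕ :=
  ∑ i ∈ T.leaves.toFinset, ∑ j ∈ T.leaves.toFinset, if i < j then cophen T i j else 0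

/-- The Sackin index: the sum of the depths of the leaves. -/
def Sackin (T : PTree) : ℕ := ∑ i ∈ T.leaves.toFinset, leafDepth T i

/-- The total area: the sum of the nodal distances between pairs of distinct leaves. -/
def Darea (T : PTree) : ℕ :=
  ∑ i ∈ T.leaves.toFinset, ∑ j ∈ T.leaves.toFinset, if i < j then ndist T i j else 0

/-- A tree is binary when every internal node has exactly two children. -/
def IsBinary : PTree → Prop
  | .leaf _ => True
  | .node ts => ts.length = 2 ∧ ∀ t ∈ ts.attach, IsBinary t.1
decreasing_by have := List.sizeOf_lt_of_mem t.2; simp_wf; omega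

/-- A tree is proper when every internal node has at least two children. -/
def Proper : PTree → Prop
  | .leaf _ => True
  | .node ts => 2 ≤ ts.length ∧ ∀ t ∈ ts.attach, Proper t.1
decreasing_by have := List.sizeOf_lt_of_mem t.2; simp_wf; omega

/-- `T` is a phylogenetic tree with `n` leaves: a proper rooted tree whose leaves are
bijectively labeled by `{1, …, n}`. -/
def IsPhylo (n : ℕ) (T : PTree) : Prop :=
  Proper T ∧ T.leaves.Nodup ∧ T.leaves.toFinset = Finset.Icc 1 n

/-- A rooted caterpillar: a binary tree all of whose internal nodes have a leaf child. -/
def IsCaterpillar : PTree → Prop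
  | .leaf _ => True
  | .node ts => ts.length = 2 ∧ (∃ t ∈ ts, ∃ i, t = PTree.leaf i) ∧
      ∀ t ∈ ts.attach, IsCaterpillar t.1
decreasing_by have := List.sizeOf_lt_of_mem t.2; simp_wf; omega

/-- A binary tree is maximally balanced when every internal node is balanced, i.e. the
numbers of descendant leaves of its two children differ by at most one. -/
def MaxBalanced : PTree → Prop
  | .leaf _ => True
  | .node [a, b] =>
      |(a.leaves.length : ℤ) - (b.leaves.length : ℤ)| ≤ 1 ∧ MaxBalanced a ∧ MaxBalanced b
  | .node _ => False

/-- Canonical representative of an isomorphism class of binary trees: at every internal node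
the subtree containing the smallest leaf label comes first. -/
def Canonical : PTree → Prop
  | .leaf _ => True
  | .node [a, b] => a.leaves.minimum < b.leaves.minimum ∧ Canonical a ∧ Canonical b
  | .node _ => False

/-- The rooted caterpillar with `n` leaves labeled `1, …, n` (for `n ≥ 1`). -/
def caterpillar : ℕ → PTree
  | 0 => .leaf 1
  | 1 => .leaf 1
  | n + 2 => .node [caterpillar (n + 1), .leaf (n + 2)]

/-- `Replace T t₀ t₀' T'` holds when `T'` is obtained from `T` by replacing the subtree `t₀`
of `T` rooted at some node by the tree `t₀'`. -/
inductive Replace : PTree → PTree → PTree → PTree → Prop where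
  | here (t₀ t₀' : PTree) : Replace t₀ t₀ t₀' t₀'
  | child (l r : List PTree) (a b t₀ t₀' : PTree) :
      Replace a t₀ t₀' b → Replace (.node (l ++ a :: r)) t₀ t₀' (.node (l ++ b :: r))

/-- The probability of a binary phylogenetic tree with `n` leaves under the Yule model. -/
noncomputable def yuleP (n : ℕ) (T : PTree) : ℝ :=
  (2 ^ (n - 1) / (n.factorial : ℝ)) *
    ((allInternalSizes T).map (fun k => ((k : ℝ) - 1)⁻¹)).prod

end PTree


/-!
A pair of leaves lying in a common child `t` of the root has cophenetic value
`1 + cophen t i j`, and any other pair has value `0`; hence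
`Φ(node ts) = ∑ t ∈ ts, (C(|L(t)|, 2) + Φ(t))`. Grouping the children `l` under a new node `x`
therefore changes `Φ` only by the new summand of `x` itself, `C(|L(x)|, 2)`, which is positive
since `x` has at least two children, each with a leaf.
-/

lemma Finset.sum_sum_boole_lt {α : Type*} [LinearOrder α] (S : Finset α) :
    ∑ i ∈ S, ∑ j ∈ S, (if i < j then 1 else 0) = S.card.choose 2 := by
  rw [← Finset.card_product_filter_lt, Finset.card_filter, Finset.sum_product]

lemma Finset.sum_list_map_comm {α β M : Type*} [AddCommMonoid M] (s : Finset α) (l : List β)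
    (f : α → β → M) : ∑ a ∈ s, (l.map (f a)).sum = (l.map fun b => ∑ a ∈ s, f a b).sum := by
  simpa using (Multiset.sum_map_sum (m := (l : Multiset β)) (s := s) (f := fun b a => f a b)).symm

namespace PTree

lemma leaves_node (ts : List PTree) : (node ts).leaves = ts.flatMap leaves := by
  rw [leaves]; simp

lemma cophen_node (ts : List PTree) (i j : ℕ) :
    cophen (node ts) i j =
      (ts.map fun t => if i ∈ t.leaves ∧ j ∈ t.leaves then 1 + cophen t i j else 0).sum := by
  rw [cophen]; simp

lemma nodup_leaves_of_sublist {l ts : List PTree} (h : l.Sublist ts)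
    (hnd : (node ts).leaves.Nodup) : (node l).leaves.Nodup := by
  rw [leaves_node] at hnd ⊢
  exact hnd.sublist (h.flatMap leaves)

lemma nodup_leaves_of_mem {ts : List PTree} (hnd : (node ts).leaves.Nodup) {t : PTree}
    (ht : t ∈ ts) : t.leaves.Nodup := by
  rw [leaves_node] at hnd
  exact (List.nodup_flatMap.mp hnd).1 t ht

lemma sum_pairs_within_child {S : Finset ℕ} {t : PTree} (hnd : t.leaves.Nodup)
    (hsub : t.leaves.toFinset ⊆ S) :
    ∑ p ∈ S ×ˢ S, (if p.1 < p.2 then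
        (if p.1 ∈ t.leaves ∧ p.2 ∈ t.leaves then 1 + cophen t p.1 p.2 else 0) else 0) =
      t.leaves.length.choose 2 + Phi t := by
  set F := t.leaves.toFinset
  rw [← Finset.sum_subset (Finset.product_subset_product hsub hsub)
    fun p _ hp => by simp_all [F, Finset.mem_product], Finset.sum_product]
  have hsplit : ∀ i ∈ F, ∀ j ∈ F, (if i < j then
      (if i ∈ t.leaves ∧ j ∈ t.leaves then 1 + cophen t i j else 0) else 0) =
      (if i < j then 1 else 0) + (if i < j then cophen t i j else 0) := by
    intro i hi j hj
    simp_all [F, ← ite_add_zero]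
  rw [Finset.sum_congr rfl fun i hi => Finset.sum_congr rfl fun j hj => hsplit i hi j hj]
  simp only [Finset.sum_add_distrib, Finset.sum_sum_boole_lt, List.toFinset_card_of_nodup hnd,
    F, Phi]

lemma Phi_node (ts : List PTree) (hnd : ∀ t ∈ ts, t.leaves.Nodup) :
    Phi (node ts) = (ts.map fun t => t.leaves.length.choose 2 + Phi t).sum := by
  set S := (node ts).leaves.toFinset
  have hsub : ∀ t ∈ ts, t.leaves.toFinset ⊆ S := fun t ht x hx => by
    simp only [S, List.mem_toFinset, leaves_node, List.mem_flatMap] at hx ⊢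
    exact ⟨t, ht, hx⟩
  have hsplit : ∀ i j, (if i < j then cophen (node ts) i j else 0) =
      (ts.map fun t => if i < j then
        (if i ∈ t.leaves ∧ j ∈ t.leaves then 1 + cophen t i j else 0) else 0).sum := by
    intro i j
    split_ifs <;> simp [cophen_node]
  rw [Phi, ← Finset.sum_product']
  simp only [hsplit]
  rw [Finset.sum_list_map_comm]
  exact congrArg List.sum <| List.map_congr_left fun t ht =>
    sum_pairs_within_child (hnd t ht) (hsub t ht)

lemma Phi_node_group (l r : List PTree) (hl : (node l).leaves.Nodup)
    (hr : ∀ t ∈ r, t.leaves.Nodup) :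
    Phi (node (node l :: r)) = Phi (node (l ++ r)) + (node l).leaves.length.choose 2 := by
  have hl' : ∀ t ∈ l, t.leaves.Nodup := fun t ht => nodup_leaves_of_mem hl ht
  rw [Phi_node _ (by simpa [hl] using hr),
    Phi_node _ (by simpa [or_imp, forall_and] using ⟨hl', hr⟩)]
  simp only [List.map_cons, List.sum_cons, List.map_append, List.sum_append, Phi_node l hl']
  omega

end PTree

theorem phi_group_children (ts : List PTree) (hk : 3 ≤ ts.length) (hne : ts ≠ [])
    (hnd : (PTree.node ts).leaves.Nodup)
    (hleaf : ∀ t ∈ ts, t.leaves ≠ []) :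
    PTree.Phi (PTree.node [PTree.node ts.dropLast, ts.getLast hne]) =
      PTree.Phi (PTree.node ts) +
        Nat.choose ((ts.dropLast.map (fun t => t.leaves.length)).sum) 2 ∧
    PTree.Phi (PTree.node ts) <
      PTree.Phi (PTree.node [PTree.node ts.dropLast, ts.getLast hne]) := by
  have hgroup := PTree.Phi_node_group ts.dropLast [ts.getLast hne]
    (PTree.nodup_leaves_of_sublist (List.dropLast_sublist ts) hnd)
    (by simpa using PTree.nodup_leaves_of_mem hnd (List.getLast_mem hne))
  rw [List.dropLast_append_getLast hne, PTree.leaves_node, List.length_flatMap] at hgroup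
  have hsize : 2 ≤ (ts.dropLast.map fun t => t.leaves.length).sum := by
    refine le_trans ?_ (List.length_le_sum_of_one_le _ fun n hn => ?_)
    · rw [List.length_map, List.length_dropLast]; omega
    · obtain ⟨t, ht, rfl⟩ := List.mem_map.mp hn
      exact List.length_pos_iff.mpr (hleaf t (List.dropLast_subset ts ht))
  exact ⟨hgroup, hgroup ▸ Nat.lt_add_of_pos_right (Nat.choose_pos hsize)⟩
end

section
/- Let f(n) denote the minimum of the total cophenetic index Φ over all binary phylogenetic trees with n leaves. Then f(1) = f(2) = 0 and, for n ≥ 3, f(n) = f(⌈n/2⌉) + f(⌊n/2⌋) + binom(⌈n/2⌉,2) + binom(⌊n/2⌋,2). -/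
/-! Cutting a binary tree at its root gives
`Φ(T) = Φ(A) + Φ(B) + binom(|A|,2) + binom(|B|,2)`, since each pair of leaves inside a root
subtree gains one in cophenetic value. Let `f` satisfy the recurrence and put
`W n = f n + binom(n,2)`; then `W n = W ⌈n/2⌉ + W ⌊n/2⌋ + binom(n,2)`, and the increments
`Δ n = W (n+1) - W n` satisfy `Δ n = Δ ⌊n/2⌋ + n`, so they are monotone. Hence `W` is discretely
convex and, for fixed `p + q`, `W p + W q` is least at the balanced split. Induction over binary
trees then gives `Φ(T) ≥ f n`, with equality at the maximally balanced tree. -/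

section PairSum

variable {α M : Type*} [LinearOrder α] [AddCommMonoid M]

def pairSum (S : Finset α) (c : α → α → M) : M :=
  ∑ i ∈ S, ∑ j ∈ S, if i < j then c i j else 0

theorem pairSum_add (S : Finset α) (c d : α → α → M) :
    pairSum S (fun i j => c i j + d i j) = pairSum S c + pairSum S d := by
  simp only [pairSum, ← Finset.sum_add_distrib, ite_add_ite, add_zero]

theorem pairSum_restrict {A S : Finset α} (hAS : A ⊆ S) (c : α → α → M) :
    pairSum S (fun i j => if i ∈ A ∧ j ∈ A then c i j else 0) = pairSum A c := by
  unfold pairSum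
  rw [← Finset.sum_subset hAS fun i _ hi => Finset.sum_eq_zero fun j _ => by simp [hi]]
  refine Finset.sum_congr rfl fun i hi => ?_
  rw [← Finset.sum_subset hAS fun j _ hj => by simp [hj]]
  exact Finset.sum_congr rfl fun j hj => by simp [hi, hj]

theorem pairSum_one (S : Finset α) : pairSum S (fun _ _ => (1 : ℕ)) = S.card.choose 2 := by
  induction S using Finset.induction_on_max with
  | empty => simp [pairSum]
  | insert x S hlt ih =>
    have hx : x ∉ S := fun h => lt_irrefl x (hlt x h)
    have hrow : ∀ i ∈ S, ∑ j ∈ insert x S, (if i < j then 1 else 0) =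
        1 + ∑ j ∈ S, (if i < j then 1 else 0) := fun i hi => by
      rw [Finset.sum_insert hx, if_pos (hlt i hi)]
    have hlast : ∑ j ∈ insert x S, (if x < j then 1 else 0) = 0 :=
      Finset.sum_eq_zero fun j hj => if_neg <| by
        rcases Finset.mem_insert.1 hj with rfl | hj
        exacts [lt_irrefl j, (hlt j hj).not_gt]
    unfold pairSum at ih ⊢
    rw [Finset.sum_insert hx, hlast, Finset.sum_congr rfl hrow, Finset.sum_add_distrib, ih,
      Finset.card_insert_of_notMem hx, Nat.choose_succ_succ', Nat.choose_one_right]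
    simp

end PairSum

namespace PTree

section Recurrence

def balPhi : ℕ → ℕ
  | 0 => 0
  | 1 => 0
  | n + 2 => balPhi ((n + 3) / 2) + balPhi ((n + 2) / 2) +
      ((n + 3) / 2).choose 2 + ((n + 2) / 2).choose 2

theorem balPhi_eq (n : ℕ) :
    balPhi n = balPhi ((n + 1) / 2) + balPhi (n / 2) +
      ((n + 1) / 2).choose 2 + (n / 2).choose 2 := by
  match n with
  | 0 | 1 => simp [balPhi]
  | n + 2 => rw [balPhi]

def balWeight (n : ℕ) : ℕ := balPhi n + n.choose 2

theorem balWeight_eq (n : ℕ) :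
    balWeight n = balWeight ((n + 1) / 2) + balWeight (n / 2) + n.choose 2 := by
  unfold balWeight
  rw [balPhi_eq n]
  ring

def balDelta : ℕ → ℕ
  | 0 => 0
  | n + 1 => balDelta ((n + 1) / 2) + (n + 1)

theorem balDelta_eq (n : ℕ) : balDelta n = balDelta (n / 2) + n := by
  cases n <;> simp [balDelta]

theorem balDelta_mono : Monotone balDelta := by
  intro m n hmn
  induction n using Nat.strong_induction_on generalizing m with
  | _ n ih =>
    rcases m.eq_zero_or_pos with rfl | hm
    · simp [balDelta]
    · rw [balDelta_eq m, balDelta_eq n]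
      have := ih (n / 2) (by omega) (Nat.div_le_div_right hmn)
      omega

theorem balWeight_succ (n : ℕ) : balWeight (n + 1) = balWeight n + balDelta n := by
  induction n using Nat.strong_induction_on with
  | _ n ih =>
    rcases n.eq_zero_or_pos with rfl | hn
    · simp [balWeight, balPhi, balDelta]
    · have hhalf := ih (n / 2) (by omega)
      rw [balWeight_eq (n + 1), balWeight_eq n, balDelta_eq n,
        show (n + 1 + 1) / 2 = n / 2 + 1 by omega, hhalf, Nat.choose_succ_succ', Nat.choose_one_right]
      ring

theorem balWeight_balanced_le (p q : ℕ) :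
    balWeight ((p + q + 1) / 2) + balWeight ((p + q) / 2) ≤ balWeight p + balWeight q := by
  wlog hpq : p ≤ q generalizing p q
  · simpa only [add_comm, add_comm q p] using this q p (by omega)
  obtain ⟨d, rfl⟩ := Nat.exists_eq_add_of_le hpq
  clear hpq
  induction d using Nat.strong_induction_on generalizing p with
  | _ d ih =>
    match d with
    | 0 => rw [show (p + (p + 0) + 1) / 2 = p by omega, show (p + (p + 0)) / 2 = p by omega]; rfl
    | 1 => rw [show (p + (p + 1) + 1) / 2 = p + 1 by omega, show (p + (p + 1)) / 2 = p by omega,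
        add_comm]
    | d + 2 =>
      have hinner := ih d (by omega) (p + 1)
      -- moving one leaf from the larger side to the smaller one does not increase the weight
      have hexchange := balDelta_mono (show p ≤ p + d + 1 by omega)
      have hlast := balWeight_succ (p + d + 1)
      rw [show p + 1 + (p + 1 + d) = p + (p + (d + 2)) by omega, balWeight_succ p,
        show p + 1 + d = p + d + 1 by omega] at hinner
      rw [show p + d + 1 + 1 = p + (d + 2) by omega] at hlast
      omega

theorem balPhi_add_le (p q : ℕ) :
    balPhi (p + q) ≤ balPhi p + balPhi q + p.choose 2 + q.choose 2 := by
  have := balWeight_balanced_le p q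
  rw [balPhi_eq]
  unfold balWeight at this
  omega

end Recurrence

section BinaryTrees

@[simp] theorem leaves_node_pair (a b : PTree) : (node [a, b]).leaves = a.leaves ++ b.leaves := by
  rw [leaves]; simp

theorem cophen_node_pair (a b : PTree) (i j : ℕ) :
    cophen (node [a, b]) i j =
      (if i ∈ a.leaves ∧ j ∈ a.leaves then 1 + cophen a i j else 0) +
      (if i ∈ b.leaves ∧ j ∈ b.leaves then 1 + cophen b i j else 0) := by
  rw [cophen]; simp

@[simp] theorem isBinary_node_pair (a b : PTree) :
    IsBinary (node [a, b]) ↔ IsBinary a ∧ IsBinary b := by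
  rw [IsBinary]; simp

theorem proper_node_pair (a b : PTree) : Proper (node [a, b]) ↔ Proper a ∧ Proper b := by
  rw [Proper]; simp

theorem IsBinary.induction {motive : PTree → Prop} (leaf : ∀ i, motive (leaf i))
    (node : ∀ a b, IsBinary a → IsBinary b → motive a → motive b → motive (node [a, b])) :
    ∀ T, IsBinary T → motive T
  | .leaf i, _ => leaf i
  | .node [a, b], h => by
    obtain ⟨ha, hb⟩ := (isBinary_node_pair a b).1 h
    exact node a b ha hb (IsBinary.induction leaf node a ha) (IsBinary.induction leaf node b hb)
  | .node [], h | .node [_], h | .node (_ :: _ :: _ :: _), h => by simp [IsBinary] at h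

theorem IsBinary.proper {T : PTree} (hT : IsBinary T) : Proper T :=
  IsBinary.induction (motive := Proper) (fun _ => by simp [Proper])
    (fun _ _ _ _ ha hb => (proper_node_pair _ _).2 ⟨ha, hb⟩) T hT

theorem Phi_eq_pairSum (T : PTree) : Phi T = pairSum T.leaves.toFinset (cophen T) := rfl

@[simp] theorem Phi_leaf (i : ℕ) : Phi (leaf i) = 0 := by
  simp [Phi, leaves]

theorem Phi_node_pair {a b : PTree} (h : (a.leaves ++ b.leaves).Nodup) :
    Phi (node [a, b]) = Phi a + Phi b + a.leaves.length.choose 2 + b.leaves.length.choose 2 := by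
  have hA : a.leaves.toFinset ⊆ (node [a, b]).leaves.toFinset := by simp
  have hB : b.leaves.toFinset ⊆ (node [a, b]).leaves.toFinset := by simp
  have hside : ∀ t : PTree, t.leaves.toFinset ⊆ (node [a, b]).leaves.toFinset →
      pairSum (node [a, b]).leaves.toFinset
        (fun i j => if i ∈ t.leaves ∧ j ∈ t.leaves then 1 + cophen t i j else 0) =
      t.leaves.toFinset.card.choose 2 + Phi t := fun t ht => by
    simp_rw [← List.mem_toFinset]
    rw [pairSum_restrict ht (fun i j => 1 + cophen t i j), pairSum_add, pairSum_one, Phi_eq_pairSum]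
  rw [Phi_eq_pairSum, funext₂ (cophen_node_pair a b), pairSum_add, hside a hA, hside b hB,
    List.toFinset_card_of_nodup (List.nodup_append.1 h).1,
    List.toFinset_card_of_nodup (List.nodup_append.1 h).2.1]
  ring

theorem balPhi_length_le_Phi {T : PTree} (hT : IsBinary T) (hnd : T.leaves.Nodup) :
    balPhi T.leaves.length ≤ Phi T := by
  refine IsBinary.induction (motive := fun T => T.leaves.Nodup → balPhi T.leaves.length ≤ Phi T)
    (fun i _ => by simp [balPhi, leaves]) (fun a b _ _ iha ihb hnd => ?_) T hT hnd
  rw [leaves_node_pair] at hnd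
  obtain ⟨hnda, hndb, -⟩ := List.nodup_append.1 hnd
  rw [leaves_node_pair, List.length_append, Phi_node_pair hnd]
  have := balPhi_add_le a.leaves.length b.leaves.length
  have := iha hnda
  have := ihb hndb
  omega

end BinaryTrees

section Balanced

def balanced (s : ℕ) : ℕ → PTree
  | 0 => leaf s
  | 1 => leaf s
  | n + 2 => node [balanced s ((n + 3) / 2), balanced (s + (n + 3) / 2) ((n + 2) / 2)]

theorem leaves_balanced (s : ℕ) {n : ℕ} (hn : 1 ≤ n) : (balanced s n).leaves = List.range' s n := by
  match n with
  | 1 => simp [balanced, leaves]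
  | n + 2 =>
    rw [balanced, leaves_node_pair, leaves_balanced s (by omega),
      leaves_balanced (s + (n + 3) / 2) (by omega), List.range'_append_1,
      show (n + 3) / 2 + (n + 2) / 2 = n + 2 by omega]

theorem isBinary_balanced (s n : ℕ) : IsBinary (balanced s n) := by
  match n with
  | 0 | 1 => simp [balanced, IsBinary]
  | n + 2 => simpa [balanced] using ⟨isBinary_balanced s _, isBinary_balanced (s + (n + 3) / 2) _⟩

theorem Phi_balanced (s : ℕ) {n : ℕ} (hn : 1 ≤ n) : Phi (balanced s n) = balPhi n := by
  match n with
  | 1 => simp [balanced, balPhi]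
  | n + 2 =>
    have hleaves := leaves_balanced s (n := n + 2) hn
    rw [balanced, leaves_node_pair] at hleaves
    rw [balanced, Phi_node_pair (hleaves ▸ List.nodup_range'), Phi_balanced s (by omega),
      Phi_balanced (s + (n + 3) / 2) (by omega), leaves_balanced s (by omega),
      leaves_balanced (s + (n + 3) / 2) (by omega), List.length_range', List.length_range', balPhi]

theorem isPhylo_balanced {n : ℕ} (hn : 1 ≤ n) : IsPhylo n (balanced 1 n) := by
  refine ⟨(isBinary_balanced 1 n).proper, ?_, ?_⟩
  · rw [leaves_balanced 1 hn]
    exact List.nodup_range'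
  · ext i
    simp only [leaves_balanced 1 hn, List.mem_toFinset, List.mem_range'_1, Finset.mem_Icc]
    omega

theorem isLeast_Phi_binary_phylo {n : ℕ} (hn : 1 ≤ n) :
    IsLeast (Phi '' {T | IsPhylo n T ∧ IsBinary T}) (balPhi n) := by
  refine ⟨⟨balanced 1 n, ⟨isPhylo_balanced hn, isBinary_balanced 1 n⟩, Phi_balanced 1 hn⟩, ?_⟩
  rintro _ ⟨T, ⟨⟨-, hnd, hset⟩, hbin⟩, rfl⟩
  have hlen : T.leaves.length = n := by
    rw [← List.toFinset_card_of_nodup hnd, hset, Nat.card_Icc, Nat.add_sub_cancel]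
  exact hlen ▸ balPhi_length_le_Phi hbin hnd

end Balanced

end PTree

theorem phi_min_recurrence (f : ℕ → ℕ)
    (hf : ∀ n, f n = sInf (PTree.Phi '' {T | PTree.IsPhylo n T ∧ PTree.IsBinary T})) :
    f 1 = 0 ∧ f 2 = 0 ∧
    ∀ n, 3 ≤ n →
      f n = f ((n + 1) / 2) + f (n / 2) +
        Nat.choose ((n + 1) / 2) 2 + Nat.choose (n / 2) 2 := by
  have hf_eq : ∀ n, 1 ≤ n → f n = PTree.balPhi n := fun n hn => by
    rw [hf, (PTree.isLeast_Phi_binary_phylo hn).csInf_eq]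
  refine ⟨by simp [hf_eq 1 le_rfl, PTree.balPhi], by simp [hf_eq 2 (by norm_num), PTree.balPhi],
    fun n hn => ?_⟩
  rw [hf_eq n (by omega), hf_eq _ (by omega), hf_eq _ (by omega)]
  exact PTree.balPhi_eq n
end
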